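/- The set { ∂_{ω}(x_2 x_3² ⋯ x_n^{n-1}) : ω ∈ S_n } is a basis of P_n = K[x_1,…,x_n] as a free module over the invariant subring P_n^{S_n}, where ∂_ω is the composition of Demazure operators along a reduced word for ω. -/

import Mathlib

/-!
Write `S ω = ∂_ω(x^δ)` for the staircase monomial `x^δ = x_2 x_3² ⋯ x_n^{n-1}` and `w₀` for the
longest permutation. Since `∂_i² = 0`, `∂_u S_v` is `S_{uv}` when `ℓ(uv) = ℓ(u) + ℓ(v)` and `0`
otherwise. The operator `∂_{w₀}` is `P_n^{S_n}`-linear, takes values in `P_n^{S_n}`, and each `∂_i`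
is self-adjoint for `⟨P, Q⟩ = ∂_{w₀}(PQ)`; an explicit reduced word of `w₀` shows `∂_{w₀}(x^δ) = 1`.
Hence `⟨S_u, S_{v w₀}⟩` is `1` for `u = v` and `0` whenever `u ≠ v` and `ℓ(u) ≥ ℓ(v)`. This
unitriangularity gives linear independence, and shows that `P` lies in the span as soon as `r P`
does for some nonzero symmetric `r`. Finally `S_n` is a Galois group of `P_n` over `P_n^{S_n}`, so
`P_n` has rank `n!` over the invariants, and the `n!` independent elements `S ω` span it up to
torsion.
-/

open MvPolynomial

/-- `IsDemazure D`: `D i` is the Demazure operator `∂_{i+1}` (zero-based index `i`),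
characterized by `D i P * (x_{i+2} - x_{i+1}) = P - s_{i+1}(P)`. -/
def IsDemazure {K : Type} [Field K] {n : ℕ}
    (D : Fin (n - 1) → MvPolynomial (Fin n) K → MvPolynomial (Fin n) K) : Prop :=
  ∀ (i : Fin (n - 1)) (P : MvPolynomial (Fin n) K),
    D i P * (X (⟨i.val + 1, by have := i.isLt; omega⟩ : Fin n) -
        X (⟨i.val, by have := i.isLt; omega⟩ : Fin n)) =
      P - rename (Equiv.swap (⟨i.val, by have := i.isLt; omega⟩ : Fin n)
        (⟨i.val + 1, by have := i.isLt; omega⟩ : Fin n)) P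

/-- The product of the simple transpositions `s_{i+1}` along a word `L`
(zero-based indices). -/
def wordProd {n : ℕ} (L : List (Fin (n - 1))) : Equiv.Perm (Fin n) :=
  (L.map (fun i => Equiv.swap (⟨i.val, by have := i.isLt; omega⟩ : Fin n)
    (⟨i.val + 1, by have := i.isLt; omega⟩ : Fin n))).prod

/-- The number of inversions of a permutation, i.e. its Coxeter length. -/
def invCount {n : ℕ} (σ : Equiv.Perm (Fin n)) : ℕ :=
  (Finset.univ.filter (fun p : Fin n × Fin n => p.1 < p.2 ∧ σ p.2 < σ p.1)).card

namespace MvPolynomial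

variable {σ R : Type*} [CommRing R]

noncomputable instance : MulSemiringAction (Equiv.Perm σ) (MvPolynomial σ R) where
  smul g p := rename g p
  one_smul p := rename_id_apply p
  mul_smul g h p := (rename_rename (R := R) h g p).symm
  smul_zero _ := _root_.map_zero _
  smul_add _ := _root_.map_add _
  smul_one _ := _root_.map_one _
  smul_mul _ := _root_.map_mul _

lemma perm_smul_eq_rename (g : Equiv.Perm σ) (p : MvPolynomial σ R) : g • p = rename g p := rfl

instance [Nontrivial R] :
    IsGaloisGroup (Equiv.Perm σ) (symmetricSubalgebra σ R) (MvPolynomial σ R) where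
  faithful := ⟨fun {g h} hgh => Equiv.ext fun i => X_injective (R := R) <| by
    simpa [perm_smul_eq_rename] using hgh (X i)⟩
  commutes := ⟨fun g a p => by
    simp only [perm_smul_eq_rename, Subalgebra.smul_def, smul_eq_mul, _root_.map_mul,
      (mem_symmetricSubalgebra _).mp a.2 g]⟩
  isInvariant := ⟨fun p hp => ⟨⟨p, (mem_symmetricSubalgebra p).mpr hp⟩, rfl⟩⟩

lemma finrank_symmetricSubalgebra [Finite σ] [IsDomain R] :
    Module.finrank (symmetricSubalgebra σ R) (MvPolynomial σ R) = Nat.card (Equiv.Perm σ) :=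
  (IsGaloisGroup.card_eq_finrank' _ _ _).symm

end MvPolynomial

lemma LinearIndependent.exists_smul_mem_span {R M ι : Type*} [CommRing R] [IsDomain R]
    [AddCommGroup M] [Module R M] [Fintype ι] [Nonempty ι] {v : ι → M}
    (hv : LinearIndependent R v) (hcard : Fintype.card ι = Module.finrank R M) (x : M) :
    ∃ r : R, r ≠ 0 ∧ r • x ∈ Submodule.span R (Set.range v) := by
  set N := Submodule.span R (Set.range v)
  have hM : Module.rank R M = Fintype.card ι :=
    (Cardinal.toNat_eq_iff Fintype.card_ne_zero).mp hcard.symm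
  have hN : Module.rank R N = Fintype.card ι := by
    classical
    rw [rank_span hv, Cardinal.mk_fintype, Set.card_range_of_injective hv.injective]
  have hquot : Module.rank R (M ⧸ N) = 0 := by
    have := rank_quotient_add_rank_of_isDomain N
    rw [hM, hN, Cardinal.add_eq_right_iff] at this
    exact this.resolve_left fun h =>
      Cardinal.natCast_lt_aleph0.not_ge ((le_max_left _ _).trans h)
  obtain ⟨r, hr⟩ := Module.rank_eq_zero_iff_isTorsion.mp hquot (x := Submodule.Quotient.mk x)
  exact ⟨r, nonZeroDivisors.coe_ne_zero r, (Submodule.Quotient.mk_eq_zero N).mp hr⟩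

open Finset Equiv

section Permutations

variable {n : ℕ}

def adjLo (t : Fin (n - 1)) : Fin n := ⟨t, by have := t.isLt; omega⟩

def adjHi (t : Fin (n - 1)) : Fin n := ⟨t + 1, by have := t.isLt; omega⟩

def adjSwap (t : Fin (n - 1)) : Perm (Fin n) := swap (adjLo t) (adjHi t)

lemma adjLo_lt_adjHi (t : Fin (n - 1)) : adjLo t < adjHi t := Fin.lt_def.mpr (Nat.lt_succ_self _)

lemma adjSwap_apply_val (t : Fin (n - 1)) (x : Fin n) :
    (adjSwap t x).val =
      if x.val = t.val then t.val + 1 else if x.val = t.val + 1 then t.val else x.val := by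
  simp only [adjSwap, swap_apply_def, Fin.ext_iff, adjLo, adjHi]
  split_ifs <;> simp_all

@[simp] lemma adjSwap_mul_self (t : Fin (n - 1)) : adjSwap t * adjSwap t = 1 := swap_mul_self _ _

lemma adjSwap_symm (t : Fin (n - 1)) : (adjSwap t).symm = adjSwap t := symm_swap _ _

@[simp] lemma adjSwap_inv (t : Fin (n - 1)) : (adjSwap t)⁻¹ = adjSwap t := swap_inv _ _

lemma wordProd_cons (t : Fin (n - 1)) (L : List (Fin (n - 1))) :
    wordProd (t :: L) = adjSwap t * wordProd L := rfl

lemma wordProd_singleton (t : Fin (n - 1)) : wordProd [t] = adjSwap t := mul_one _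

lemma wordProd_append (L M : List (Fin (n - 1))) :
    wordProd (L ++ M) = wordProd L * wordProd M := by
  simp [wordProd]

lemma wordProd_reverse (L : List (Fin (n - 1))) : wordProd L.reverse = (wordProd L)⁻¹ := by
  induction L with
  | nil => rfl
  | cons t L ih =>
    rw [List.reverse_cons, wordProd_append, ih, wordProd_cons t L, mul_inv_rev, adjSwap_inv,
      wordProd_singleton]

def inversions (σ : Perm (Fin n)) : Finset (Fin n × Fin n) :=
  univ.filter fun p => p.1 < p.2 ∧ σ p.2 < σ p.1

lemma invCount_eq_card_inversions (σ : Perm (Fin n)) : invCount σ = #(inversions σ) := rfl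

lemma inversions_adjSwap_mul {σ : Perm (Fin n)} {t : Fin (n - 1)}
    (h : σ⁻¹ (adjLo t) < σ⁻¹ (adjHi t)) :
    inversions (adjSwap t * σ) = insert (σ⁻¹ (adjLo t), σ⁻¹ (adjHi t)) (inversions σ) := by
  have hlo : ∀ i, i = σ⁻¹ (adjLo t) ↔ (σ i).val = t := fun i => by
    rw [Perm.eq_inv_iff_eq, Fin.ext_iff]; rfl
  have hhi : ∀ i, i = σ⁻¹ (adjHi t) ↔ (σ i).val = t + 1 := fun i => by
    rw [Perm.eq_inv_iff_eq, Fin.ext_iff]; rfl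
  have hord : ∀ i j, (σ i).val = t + 1 → (σ j).val = t → j < i := fun i j hi hj => by
    rwa [(hlo j).mpr hj, (hhi i).mpr hi]
  have hinj : ∀ i j, (σ i).val = (σ j).val → i = j := fun i j e => σ.injective (Fin.ext e)
  ext ⟨i, j⟩
  simp only [inversions, mem_insert, mem_filter, mem_univ, true_and, Prod.mk.injEq, hlo, hhi,
    Perm.mul_apply, Fin.lt_def, adjSwap_apply_val]
  have := hord i j
  have := hord j i
  have := hinj i j
  simp only [Fin.lt_def] at *
  split_ifs <;> omega

lemma invCount_adjSwap_mul_of_lt {σ : Perm (Fin n)} {t : Fin (n - 1)}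
    (h : σ⁻¹ (adjLo t) < σ⁻¹ (adjHi t)) : invCount (adjSwap t * σ) = invCount σ + 1 := by
  rw [invCount_eq_card_inversions, inversions_adjSwap_mul h, card_insert_of_notMem]
  · rfl
  simp [inversions, (adjLo_lt_adjHi t).not_gt]

lemma invCount_adjSwap_mul_of_gt {σ : Perm (Fin n)} {t : Fin (n - 1)}
    (h : σ⁻¹ (adjHi t) < σ⁻¹ (adjLo t)) : invCount (adjSwap t * σ) + 1 = invCount σ := by
  have h' : (adjSwap t * σ)⁻¹ (adjLo t) < (adjSwap t * σ)⁻¹ (adjHi t) := by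
    simpa [mul_inv_rev, adjSwap, swap_apply_left, swap_apply_right] using h
  simpa [← mul_assoc] using (invCount_adjSwap_mul_of_lt h').symm

lemma invCount_adjSwap_mul (σ : Perm (Fin n)) (t : Fin (n - 1)) :
    invCount (adjSwap t * σ) = invCount σ + 1 ∨ invCount (adjSwap t * σ) + 1 = invCount σ := by
  rcases lt_or_gt_of_ne (σ⁻¹.injective.ne (adjLo_lt_adjHi t).ne) with h | h
  · exact .inl (invCount_adjSwap_mul_of_lt h)
  · exact .inr (invCount_adjSwap_mul_of_gt h)

lemma invCount_one : invCount (1 : Perm (Fin n)) = 0 := by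
  simp only [invCount, Perm.one_apply]
  exact card_eq_zero.mpr (filter_false_of_mem fun p _ h => lt_asymm h.1 h.2)

lemma eq_one_of_strictMono {α : Type*} [LinearOrder α] [WellFoundedLT α] {σ : Perm α}
    (hσ : StrictMono σ) : σ = 1 :=
  Equiv.ext fun i => congrArg (· i) (Subsingleton.elim (hσ.orderIsoOfSurjective σ σ.surjective)
    (OrderIso.refl _))

lemma exists_adjSwap_descent {σ : Perm (Fin n)} (hσ : σ ≠ 1) :
    ∃ t : Fin (n - 1), σ⁻¹ (adjHi t) < σ⁻¹ (adjLo t) := by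
  obtain _ | k := n
  · exact absurd (Subsingleton.elim σ 1) hσ
  by_contra! hasc
  refine hσ (inv_eq_one.mp (eq_one_of_strictMono (Fin.strictMono_iff_lt_succ.mpr fun i => ?_)))
  refine (hasc ⟨i, by omega⟩).lt_of_ne (σ⁻¹.injective.ne ?_)
  simp [adjLo, adjHi, Fin.ext_iff]

lemma exists_reduced_word (σ : Perm (Fin n)) :
    ∃ L : List (Fin (n - 1)), wordProd L = σ ∧ invCount σ = L.length := by
  induction h : invCount σ using Nat.strong_induction_on generalizing σ with
  | _ k ih =>
    by_cases hσ : σ = 1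
    · exact ⟨[], hσ.symm, by rw [← h, hσ, invCount_one]; rfl⟩
    · obtain ⟨t, ht⟩ := exists_adjSwap_descent hσ
      have hlen := invCount_adjSwap_mul_of_gt ht
      obtain ⟨L, hL, hlen'⟩ := ih _ (by omega) (adjSwap t * σ) rfl
      refine ⟨t :: L, by rw [wordProd_cons, hL, ← mul_assoc, adjSwap_mul_self, one_mul], ?_⟩
      simp only [List.length_cons]
      omega

lemma invCount_inv (σ : Perm (Fin n)) : invCount σ⁻¹ = invCount σ := by
  refine (card_equiv ((prodComm _ _).trans (prodCongr σ σ)) fun p => ?_).symm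
  simp [and_comm]

lemma invCount_wordProd_mul_le (L : List (Fin (n - 1))) (σ : Perm (Fin n)) :
    invCount (wordProd L * σ) ≤ L.length + invCount σ := by
  induction L with
  | nil => simp [wordProd]
  | cons t L ih =>
    rw [wordProd_cons, mul_assoc, List.length_cons]
    rcases invCount_adjSwap_mul (wordProd L * σ) t with h | h <;> omega

lemma invCount_eq_zero_iff {σ : Perm (Fin n)} : invCount σ = 0 ↔ σ = 1 := by
  refine ⟨fun h => eq_one_of_strictMono fun i j hij => ?_, fun h => h ▸ invCount_one⟩
  refine (le_of_not_gt fun hji => ?_).lt_of_ne (σ.injective.ne hij.ne)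
  have hmem : (i, j) ∈ inversions σ := by simp [inversions, hij, hji]
  rw [invCount_eq_card_inversions, card_eq_zero] at h
  simp [h] at hmem

def longest (n : ℕ) : Perm (Fin n) := Fin.revPerm

@[simp] lemma longest_inv : (longest n)⁻¹ = longest n := rfl

lemma inversions_longest :
    inversions (longest n) = univ.filter fun p : Fin n × Fin n => p.1 < p.2 := by
  ext p
  simp [inversions, longest]

lemma invCount_longest_mul (σ : Perm (Fin n)) :
    invCount (longest n * σ) + invCount σ = invCount (longest n) := by
  have hlongest : ∀ τ : Perm (Fin n), inversions (longest n * τ) =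
      (univ.filter fun p : Fin n × Fin n => p.1 < p.2).filter fun p => ¬ τ p.2 < τ p.1 := by
    intro τ
    ext p
    simp only [inversions, longest, mem_filter, mem_univ, true_and, Perm.mul_apply,
      Fin.revPerm_apply, Fin.rev_lt_rev, not_lt, and_congr_right_iff]
    exact fun hp => ⟨le_of_lt, fun h => h.lt_of_ne (τ.injective.ne hp.ne)⟩
  rw [invCount_eq_card_inversions, invCount_eq_card_inversions, invCount_eq_card_inversions,
    hlongest, inversions_longest, inversions, ← filter_filter, add_comm,
    card_filter_add_card_filter_not]

lemma invCount_longest : invCount (longest n) = ∑ i ∈ range n, (n - 1 - i) := by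
  rw [invCount_eq_card_inversions, inversions_longest, card_filter, Fintype.sum_prod_type]
  simp_rw [← card_filter, filter_lt_eq_Ioi, Fin.card_Ioi]
  exact Fin.sum_univ_eq_sum_range (fun i => n - 1 - i) n

lemma invCount_le_invCount_longest (σ : Perm (Fin n)) : invCount σ ≤ invCount (longest n) :=
  (invCount_longest_mul σ).le.trans' (Nat.le_add_left _ _)

lemma eq_longest_of_invCount_eq {σ : Perm (Fin n)} (h : invCount σ = invCount (longest n)) :
    σ = longest n := by
  have := invCount_longest_mul σ
  exact (mul_eq_one_iff_inv_eq.mp (invCount_eq_zero_iff.mp (by omega))).symm.trans longest_inv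

lemma invCount_mul_longest (σ : Perm (Fin n)) :
    invCount (σ * longest n) + invCount σ = invCount (longest n) := by
  rw [← invCount_inv, mul_inv_rev, longest_inv, ← invCount_inv σ]
  exact invCount_longest_mul σ⁻¹

lemma invCount_adjSwap_mul_longest (t : Fin (n - 1)) :
    invCount (adjSwap t * longest n) + 1 = invCount (longest n) := by
  have := invCount_le_invCount_longest (adjSwap t * longest n)
  rcases invCount_adjSwap_mul (longest n) t with h | h <;> omega

end Permutations

lemma MvPolynomial.isSymmetric_of_forall_rename_adjSwap {R : Type*} [CommSemiring R] {n : ℕ}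
    {p : MvPolynomial (Fin n) R} (hp : ∀ t, rename (adjSwap t) p = p) : p.IsSymmetric := by
  have hword : ∀ L : List (Fin (n - 1)), rename (wordProd L) p = p := by
    intro L
    induction L with
    | nil => exact rename_id_apply p
    | cons t L ih => rw [wordProd_cons, Perm.coe_mul, ← rename_rename, ih, hp]
  intro σ
  obtain ⟨L, rfl, -⟩ := exists_reduced_word σ
  exact hword L

lemma X_adjHi_sub_X_adjLo_ne_zero {R : Type*} [CommRing R] [Nontrivial R] {n : ℕ}
    (t : Fin (n - 1)) : (X (adjHi t) - X (adjLo t) : MvPolynomial (Fin n) R) ≠ 0 :=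
  sub_ne_zero.mpr fun h => (adjLo_lt_adjHi t).ne' (X_injective h)

noncomputable def staircase (n : ℕ) (R : Type*) [CommSemiring R] : MvPolynomial (Fin n) R :=
  ∏ i : Fin n, X i ^ i.val

/-- `j ∸ m` at positions `j < k` and `j ∸ (m + 1)` at positions `j ≥ k`: the exponent of the
staircase monomial after `m` full sweeps `D (n - 2), …, D i` and the part `D (n - 2), …, D (k - 1)`
of the next one. -/
noncomputable def sweepExponent (n m k : ℕ) : Fin n →₀ ℕ :=
  Finsupp.equivFunOnFinite.symm fun j => if j.val < k then j - m else j - 1 - m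

lemma sweepExponent_apply {n : ℕ} (m k : ℕ) (j : Fin n) :
    sweepExponent n m k j = if j.val < k then j - m else j - 1 - m := rfl

section Demazure

variable {K : Type} [Field K] {n : ℕ}

namespace IsDemazure

variable {D : Fin (n - 1) → MvPolynomial (Fin n) K → MvPolynomial (Fin n) K}

lemma mul_X_sub_X (hD : IsDemazure D) (t : Fin (n - 1)) (P : MvPolynomial (Fin n) K) :
    D t P * (X (adjHi t) - X (adjLo t)) = P - rename (adjSwap t) P :=
  hD t P

lemma eq_of_mul_X_sub_X (hD : IsDemazure D) {t : Fin (n - 1)} {P Q : MvPolynomial (Fin n) K}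
    (h : Q * (X (adjHi t) - X (adjLo t)) = P - rename (adjSwap t) P) : D t P = Q :=
  mul_right_cancel₀ (X_adjHi_sub_X_adjLo_ne_zero t) ((hD.mul_X_sub_X t P).trans h.symm)

lemma map_zero (hD : IsDemazure D) (t : Fin (n - 1)) : D t 0 = 0 :=
  hD.eq_of_mul_X_sub_X (by simp)

lemma map_add (hD : IsDemazure D) (t : Fin (n - 1)) (P Q : MvPolynomial (Fin n) K) :
    D t (P + Q) = D t P + D t Q :=
  hD.eq_of_mul_X_sub_X (by rw [add_mul, hD.mul_X_sub_X, hD.mul_X_sub_X, _root_.map_add]; ring)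

lemma apply_mul_of_rename_eq (hD : IsDemazure D) {t : Fin (n - 1)} {f : MvPolynomial (Fin n) K}
    (hf : rename (adjSwap t) f = f) (P : MvPolynomial (Fin n) K) : D t (f * P) = f * D t P :=
  hD.eq_of_mul_X_sub_X (by rw [mul_assoc, hD.mul_X_sub_X, _root_.map_mul, hf, mul_sub])

lemma rename_adjSwap_apply (hD : IsDemazure D) (t : Fin (n - 1)) (P : MvPolynomial (Fin n) K) :
    rename (adjSwap t) (D t P) = D t P := by
  refine (hD.eq_of_mul_X_sub_X ?_).symm
  have h := congrArg (rename (adjSwap t)) (hD.mul_X_sub_X t P)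
  rw [_root_.map_mul, map_sub, map_sub, rename_X, rename_X, rename_rename, ← Perm.coe_mul,
    adjSwap_mul_self, Perm.coe_one, rename_id_apply] at h
  simpa [adjSwap, ← mul_neg] using congrArg Neg.neg h

lemma foldr_add (hD : IsDemazure D) (L : List (Fin (n - 1))) (P Q : MvPolynomial (Fin n) K) :
    L.foldr (fun i Q => D i Q) (P + Q) =
      L.foldr (fun i Q => D i Q) P + L.foldr (fun i Q => D i Q) Q := by
  induction L with
  | nil => rfl
  | cons t L ih => simp only [List.foldr_cons, ih, hD.map_add]

lemma foldr_mul_of_isSymmetric (hD : IsDemazure D) (L : List (Fin (n - 1)))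
    {f : MvPolynomial (Fin n) K} (hf : f.IsSymmetric) (P : MvPolynomial (Fin n) K) :
    L.foldr (fun i Q => D i Q) (f * P) = f * L.foldr (fun i Q => D i Q) P := by
  induction L with
  | nil => rfl
  | cons t L ih => simp only [List.foldr_cons, ih, hD.apply_mul_of_rename_eq (hf _)]

lemma apply_monomial (hD : IsDemazure D) {t : Fin (n - 1)} {E E' : Fin n →₀ ℕ}
    (hE : E = E' + Finsupp.single (adjHi t) 1)
    (hsE : E.mapDomain (adjSwap t) = E' + Finsupp.single (adjLo t) 1) :
    D t (monomial E 1) = monomial E' 1 :=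
  hD.eq_of_mul_X_sub_X (by
    rw [mul_sub, X, X, monomial_mul, monomial_mul, mul_one, rename_monomial, ← hE, ← hsE])

lemma apply_apply (hD : IsDemazure D) (t : Fin (n - 1)) (P : MvPolynomial (Fin n) K) :
    D t (D t P) = 0 :=
  hD.eq_of_mul_X_sub_X (by rw [hD.rename_adjSwap_apply, sub_self, zero_mul])

lemma apply_sweepExponent (hD : IsDemazure D) {m k : ℕ} (hmk : m ≤ k) (hk : k < n - 1) :
    D ⟨k, hk⟩ (monomial (sweepExponent n m (k + 2)) 1) =
      monomial (sweepExponent n m (k + 1)) 1 := by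
  apply hD.apply_monomial <;> ext j
  · simp only [Finsupp.add_apply, sweepExponent_apply, Finsupp.single_apply, Fin.ext_iff, adjHi]
    split_ifs <;> omega
  · rw [Finsupp.mapDomain_equiv_apply, Finsupp.add_apply, Finsupp.single_apply]
    simp only [sweepExponent_apply, Fin.ext_iff, adjLo, adjSwap_symm, adjSwap_apply_val]
    split_ifs <;> omega

lemma foldr_drop_finRange (hD : IsDemazure D) {m k : ℕ} (hmk : m ≤ k) (hk : k ≤ n - 1) :
    ((List.finRange (n - 1)).drop k).foldr (fun i Q => D i Q) (monomial (sweepExponent n m n) 1) =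
      monomial (sweepExponent n m (k + 1)) 1 := by
  induction hd : n - 1 - k generalizing k with
  | zero =>
    rw [List.drop_eq_nil_of_le (by simp; omega), List.foldr_nil]
    refine congrArg (monomial · 1) (Finsupp.ext fun j => ?_)
    simp only [sweepExponent_apply]
    split_ifs <;> omega
  | succ d ih =>
    rw [List.drop_eq_getElem_cons (by simp; omega), List.foldr_cons,
      ih (by omega) (by omega) (by omega), List.getElem_finRange]
    exact hD.apply_sweepExponent hmk (by omega)

lemma exists_word_foldr_staircase (hD : IsDemazure D) :
    ∃ L : List (Fin (n - 1)), L.length = invCount (longest n) ∧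
      L.foldr (fun i Q => D i Q) (staircase n K) = 1 := by
  have hstart : staircase n K = monomial (sweepExponent n 0 n) 1 := by
    rw [monomial_eq, C_1, one_mul, Finsupp.prod_fintype _ _ fun _ => pow_zero _]
    exact prod_congr rfl fun j _ => by simp [sweepExponent_apply]
  have hend : sweepExponent n n n = 0 := Finsupp.ext fun j => by
    simp only [sweepExponent_apply, Finsupp.coe_zero, Pi.zero_apply]
    split_ifs <;> omega
  suffices h : ∀ m ≤ n, ∃ L : List (Fin (n - 1)), L.length = ∑ i ∈ range m, (n - 1 - i) ∧
      L.foldr (fun i Q => D i Q) (staircase n K) = monomial (sweepExponent n m n) 1 by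
    obtain ⟨L, hlen, hL⟩ := h n le_rfl
    exact ⟨L, hlen.trans invCount_longest.symm, by rw [hL, hend, monomial_zero', C_1]⟩
  intro m hm
  induction m with
  | zero => exact ⟨[], rfl, hstart⟩
  | succ m ih =>
    obtain ⟨L, hlen, hL⟩ := ih (by omega)
    refine ⟨(List.finRange (n - 1)).drop m ++ L, by simp [hlen, sum_range_succ]; omega, ?_⟩
    rw [List.foldr_append, hL, hD.foldr_drop_finRange le_rfl (by omega)]
    refine congrArg (monomial · 1) (Finsupp.ext fun j => ?_)
    simp only [sweepExponent_apply]
    split_ifs <;> omega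

end IsDemazure

variable (D : Fin (n - 1) → MvPolynomial (Fin n) K → MvPolynomial (Fin n) K)
  (Dw : Perm (Fin n) → MvPolynomial (Fin n) K → MvPolynomial (Fin n) K)

def IsDemazureProduct : Prop :=
  ∀ (ω : Perm (Fin n)) (L : List (Fin (n - 1))), wordProd L = ω → invCount ω = L.length →
    ∀ P, Dw ω P = L.foldr (fun i Q => D i Q) P

namespace IsDemazureProduct

variable {D Dw}

lemma one_apply (hDw : IsDemazureProduct D Dw) (P : MvPolynomial (Fin n) K) : Dw 1 P = P :=
  hDw 1 [] rfl invCount_one P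

lemma adjSwap_mul_apply (hDw : IsDemazureProduct D Dw) {t : Fin (n - 1)} {ω : Perm (Fin n)}
    (h : invCount (adjSwap t * ω) = invCount ω + 1) (P : MvPolynomial (Fin n) K) :
    Dw (adjSwap t * ω) P = D t (Dw ω P) := by
  obtain ⟨L, hL, hlen⟩ := exists_reduced_word ω
  rw [hDw ω L hL hlen, hDw _ (t :: L) (by rw [wordProd_cons, hL]) (by simp [h, hlen])]
  rfl

lemma demazure_apply_eq_zero (hD : IsDemazure D) (hDw : IsDemazureProduct D Dw)
    {t : Fin (n - 1)} {ω : Perm (Fin n)} (h : invCount (adjSwap t * ω) + 1 = invCount ω)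
    (P : MvPolynomial (Fin n) K) : D t (Dw ω P) = 0 := by
  have hω : adjSwap t * (adjSwap t * ω) = ω := by rw [← mul_assoc, adjSwap_mul_self, one_mul]
  rw [← hω, hDw.adjSwap_mul_apply (by rw [hω, h]), hD.apply_apply]

lemma foldr_apply (hD : IsDemazure D) (hDw : IsDemazureProduct D Dw) (L : List (Fin (n - 1)))
    (v : Perm (Fin n)) (P : MvPolynomial (Fin n) K) :
    L.foldr (fun i Q => D i Q) (Dw v P) =
      if invCount (wordProd L * v) = L.length + invCount v then Dw (wordProd L * v) P else 0 := by
  induction L with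
  | nil => simp [wordProd]
  | cons t L ih =>
    have hle := invCount_wordProd_mul_le L v
    rw [List.foldr_cons, ih, wordProd_cons, mul_assoc, List.length_cons]
    split_ifs with h₁ h₂ h₂
    · exact (hDw.adjSwap_mul_apply (by omega) P).symm
    · rcases invCount_adjSwap_mul (wordProd L * v) t with h | h
      · omega
      · exact hDw.demazure_apply_eq_zero hD h P
    · rcases invCount_adjSwap_mul (wordProd L * v) t with h | h <;> omega
    · exact hD.map_zero t

lemma map_add (hD : IsDemazure D) (hDw : IsDemazureProduct D Dw) (ω : Perm (Fin n))
    (P Q : MvPolynomial (Fin n) K) : Dw ω (P + Q) = Dw ω P + Dw ω Q := by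
  obtain ⟨L, hL, hlen⟩ := exists_reduced_word ω
  simp only [hDw ω L hL hlen, hD.foldr_add]

lemma apply_mul_of_isSymmetric (hD : IsDemazure D) (hDw : IsDemazureProduct D Dw)
    (ω : Perm (Fin n)) {f : MvPolynomial (Fin n) K} (hf : f.IsSymmetric)
    (P : MvPolynomial (Fin n) K) : Dw ω (f * P) = f * Dw ω P := by
  obtain ⟨L, hL, hlen⟩ := exists_reduced_word ω
  simp only [hDw ω L hL hlen, hD.foldr_mul_of_isSymmetric L hf]

lemma longest_apply (hDw : IsDemazureProduct D Dw) (t : Fin (n - 1)) (P : MvPolynomial (Fin n) K) :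
    Dw (longest n) P = D t (Dw (adjSwap t * longest n) P) := by
  have hs : adjSwap t * (adjSwap t * longest n) = longest n := by
    rw [← mul_assoc, adjSwap_mul_self, one_mul]
  have := invCount_adjSwap_mul_longest t
  conv_lhs => rw [← hs]
  exact hDw.adjSwap_mul_apply (by rw [hs]; omega) P

lemma longest_apply_eq_apply_demazure (hDw : IsDemazureProduct D Dw) (t : Fin (n - 1))
    (P : MvPolynomial (Fin n) K) : Dw (longest n) P = Dw (longest n * adjSwap t) (D t P) := by
  obtain ⟨L, hL, hlen⟩ := exists_reduced_word (longest n * adjSwap t)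
  have hinv : invCount (longest n * adjSwap t) = invCount (adjSwap t * longest n) := by
    rw [← invCount_inv, mul_inv_rev, adjSwap_inv, longest_inv]
  have := invCount_adjSwap_mul_longest t
  rw [hDw _ (L ++ [t]) (by rw [wordProd_append, hL, wordProd_singleton, mul_assoc,
      adjSwap_mul_self, mul_one]) (by simp; omega), hDw _ L hL hlen, List.foldr_append]
  rfl

lemma isSymmetric_longest_apply (hD : IsDemazure D) (hDw : IsDemazureProduct D Dw)
    (P : MvPolynomial (Fin n) K) : (Dw (longest n) P).IsSymmetric :=
  isSymmetric_of_forall_rename_adjSwap fun t => by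
    rw [hDw.longest_apply t]
    exact hD.rename_adjSwap_apply t _

lemma longest_apply_demazure_mul (hD : IsDemazure D) (hDw : IsDemazureProduct D Dw)
    (t : Fin (n - 1)) (P Q : MvPolynomial (Fin n) K) :
    Dw (longest n) (D t P * Q) = Dw (longest n) (P * D t Q) := by
  rw [hDw.longest_apply_eq_apply_demazure t, hDw.longest_apply_eq_apply_demazure t,
    hD.apply_mul_of_rename_eq (hD.rename_adjSwap_apply t P), mul_comm P,
    hD.apply_mul_of_rename_eq (hD.rename_adjSwap_apply t Q), mul_comm]

lemma longest_apply_foldr_mul (hD : IsDemazure D) (hDw : IsDemazureProduct D Dw)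
    (L : List (Fin (n - 1))) (P Q : MvPolynomial (Fin n) K) :
    Dw (longest n) (L.foldr (fun i Q => D i Q) P * Q) =
      Dw (longest n) (P * L.reverse.foldr (fun i Q => D i Q) Q) := by
  induction L generalizing Q with
  | nil => rfl
  | cons t L ih =>
    rw [List.foldr_cons, hDw.longest_apply_demazure_mul hD, ih, List.reverse_cons,
      List.foldr_append]
    rfl

lemma map_zero (hD : IsDemazure D) (hDw : IsDemazureProduct D Dw) (ω : Perm (Fin n)) :
    Dw ω 0 = 0 := by
  simpa using hDw.apply_mul_of_isSymmetric hD ω IsSymmetric.zero 0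

lemma longest_apply_staircase (hD : IsDemazure D) (hDw : IsDemazureProduct D Dw) :
    Dw (longest n) (staircase n K) = 1 := by
  obtain ⟨L, hlen, hL⟩ := hD.exists_word_foldr_staircase
  have h := hDw.foldr_apply hD L 1 (staircase n K)
  rw [hDw.one_apply, hL, mul_one, invCount_one, add_zero] at h
  split_ifs at h with hc
  · rwa [eq_longest_of_invCount_eq (hc.trans hlen), eq_comm] at h
  · exact absurd h one_ne_zero

lemma longest_apply_mul_of_invCount_le (hD : IsDemazure D) (hDw : IsDemazureProduct D Dw)
    {u v : Perm (Fin n)} (h : invCount v ≤ invCount u) :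
    Dw (longest n) (Dw u (staircase n K) * Dw (v * longest n) (staircase n K)) =
      if u = v then 1 else 0 := by
  obtain ⟨L, hL, hlen⟩ := exists_reduced_word u
  rw [hDw u L hL hlen, hDw.longest_apply_foldr_mul hD, hDw.foldr_apply hD, wordProd_reverse, hL,
    List.length_reverse, ← hlen]
  have hv := invCount_mul_longest v
  split_ifs with hc huv huv
  · subst huv
    rw [inv_mul_cancel_left, hDw.longest_apply_staircase hD, mul_one,
      hDw.longest_apply_staircase hD]
  · have hle := invCount_le_invCount_longest (u⁻¹ * (v * longest n))
    have hw := eq_longest_of_invCount_eq (σ := u⁻¹ * (v * longest n)) (by omega)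
    rw [← mul_assoc, mul_eq_right, inv_mul_eq_one] at hw
    exact absurd hw huv
  · subst huv
    rw [inv_mul_cancel_left] at hc
    omega
  · rw [mul_zero, hDw.map_zero hD]

def longestLinearMap (hD : IsDemazure D) (hDw : IsDemazureProduct D Dw) :
    MvPolynomial (Fin n) K →ₗ[symmetricSubalgebra (Fin n) K] symmetricSubalgebra (Fin n) K where
  toFun P := ⟨Dw (longest n) P, hDw.isSymmetric_longest_apply hD P⟩
  map_add' P Q := Subtype.ext (hDw.map_add hD _ P Q)
  map_smul' f P := Subtype.ext (hDw.apply_mul_of_isSymmetric hD _ f.2 P)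

lemma longestLinearMap_mul_of_invCount_le (hD : IsDemazure D) (hDw : IsDemazureProduct D Dw)
    {u v : Perm (Fin n)} (h : invCount v ≤ invCount u) :
    hDw.longestLinearMap hD (Dw u (staircase n K) * Dw (v * longest n) (staircase n K)) =
      if u = v then 1 else 0 := by
  apply Subtype.ext
  change Dw (longest n) _ = _
  rw [hDw.longest_apply_mul_of_invCount_le hD h]
  split_ifs <;> rfl

/-- The pairing `(P, Q) ↦ Dw (longest n) (P * Q)` between the families `Dw u (staircase n K)` and
`Dw (v * longest n) (staircase n K)` is unitriangular for the length order, so the coefficients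
can be solved for one length at a time. -/
lemma coeff_mem_of_forall_longestLinearMap_mem (hD : IsDemazure D) (hDw : IsDemazureProduct D Dw)
    (I : Ideal (symmetricSubalgebra (Fin n) K)) (c : Perm (Fin n) → symmetricSubalgebra (Fin n) K)
    (hI : ∀ v, hDw.longestLinearMap hD
      ((∑ u, c u • Dw u (staircase n K)) * Dw (v * longest n) (staircase n K)) ∈ I)
    (v : Perm (Fin n)) : c v ∈ I := by
  induction h : invCount v using Nat.strong_induction_on generalizing v with
  | _ k ih =>
    have hv := hI v
    simp_rw [sum_mul, map_sum, smul_mul_assoc, map_smul, smul_eq_mul] at hv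
    rw [← sum_filter_add_sum_filter_not univ (fun u => invCount u < invCount v)] at hv
    have hlow : ∑ u ∈ univ.filter (fun u => invCount u < invCount v), c u *
        hDw.longestLinearMap hD (Dw u (staircase n K) * Dw (v * longest n) (staircase n K)) ∈ I :=
      I.sum_mem fun u hu => I.mul_mem_right _ (ih _ (h ▸ (mem_filter.mp hu).2) u rfl)
    have hhigh : ∑ u ∈ univ.filter (fun u => ¬ invCount u < invCount v), c u *
        hDw.longestLinearMap hD
          (Dw u (staircase n K) * Dw (v * longest n) (staircase n K)) = c v := by
      rw [sum_congr rfl fun u hu =>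
        by rw [hDw.longestLinearMap_mul_of_invCount_le hD (not_lt.mp (mem_filter.mp hu).2)]]
      simp [mul_ite]
    rw [hhigh] at hv
    simpa using I.sub_mem hv hlow

lemma linearIndependent (hD : IsDemazure D) (hDw : IsDemazureProduct D Dw) :
    LinearIndependent (symmetricSubalgebra (Fin n) K) fun ω => Dw ω (staircase n K) := by
  refine Fintype.linearIndependent_iff.mpr fun c hc v => ?_
  refine (Ideal.mem_bot).mp (hDw.coeff_mem_of_forall_longestLinearMap_mem hD ⊥ c (fun v => ?_) v)
  rw [hc, zero_mul, _root_.map_zero]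
  exact Ideal.zero_mem _

lemma mem_span_of_smul_mem_span (hD : IsDemazure D) (hDw : IsDemazureProduct D Dw)
    {r : symmetricSubalgebra (Fin n) K} (hr : r ≠ 0) {P : MvPolynomial (Fin n) K}
    (hP : r • P ∈ Submodule.span (symmetricSubalgebra (Fin n) K)
      (Set.range fun ω => Dw ω (staircase n K))) :
    P ∈ Submodule.span (symmetricSubalgebra (Fin n) K)
      (Set.range fun ω => Dw ω (staircase n K)) := by
  obtain ⟨c, hc⟩ := (Submodule.mem_span_range_iff_exists_fun _).mp hP
  have hdvd : ∀ v, c v ∈ Ideal.span {r} :=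
    hDw.coeff_mem_of_forall_longestLinearMap_mem hD _ c fun v => by
      rw [hc, smul_mul_assoc, map_smul, smul_eq_mul]
      exact Ideal.mul_mem_right _ _ (Ideal.mem_span_singleton_self r)
  choose g hg using fun v => Ideal.mem_span_singleton'.mp (hdvd v)
  refine (Submodule.mem_span_range_iff_exists_fun _).mpr ⟨g, smul_right_injective _ hr ?_⟩
  simp only [← hc, ← hg, smul_sum, mul_comm, mul_smul]

end IsDemazureProduct

end Demazure

theorem demazure_staircase_basis_general {K : Type} [Field K] (n : ℕ)
    (D : Fin (n - 1) → MvPolynomial (Fin n) K → MvPolynomial (Fin n) K)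
    (hD : IsDemazure D)
    (Dw : Equiv.Perm (Fin n) → MvPolynomial (Fin n) K → MvPolynomial (Fin n) K)
    (hDw : ∀ (ω : Equiv.Perm (Fin n)) (L : List (Fin (n - 1))),
      wordProd L = ω → invCount ω = L.length →
      ∀ P, Dw ω P = L.foldr (fun i Q => D i Q) P) :
    LinearIndependent (↥(symmetricSubalgebra (Fin n) K))
        (fun ω : Equiv.Perm (Fin n) => Dw ω (∏ i : Fin n, X i ^ i.val)) ∧
    Submodule.span (↥(symmetricSubalgebra (Fin n) K))
        (Set.range (fun ω : Equiv.Perm (Fin n) => Dw ω (∏ i : Fin n, X i ^ i.val))) = ⊤ := by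
  have hind := IsDemazureProduct.linearIndependent hD hDw
  refine ⟨hind, Submodule.eq_top_iff'.mpr fun P => ?_⟩
  obtain ⟨r, hr, hrP⟩ := hind.exists_smul_mem_span
    (by rw [finrank_symmetricSubalgebra, Nat.card_eq_fintype_card]) P
  exact IsDemazureProduct.mem_span_of_smul_mem_span hD hDw hr hrP

/-- The set `{∂_ω(x_2 x_3² ⋯ x_n^{n-1}) : ω ∈ S_n}` is a basis of
`P_n = K[x_1,…,x_n]` as a module over `P_n^{S_n}`.  Here `Dw ω` is `∂_ω`, the composition
of Demazure operators along any reduced word for `ω` (a word whose length equals the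
number of inversions of its product), applied in word order. -/
theorem demazure_staircase_basis {K : Type} [Field K] (n : ℕ) (hn : 1 ≤ n)
    (D : Fin (n - 1) → MvPolynomial (Fin n) K → MvPolynomial (Fin n) K)
    (hD : IsDemazure D)
    (Dw : Equiv.Perm (Fin n) → MvPolynomial (Fin n) K → MvPolynomial (Fin n) K)
    (hDw : ∀ (ω : Equiv.Perm (Fin n)) (L : List (Fin (n - 1))),
      wordProd L = ω → invCount ω = L.length →
      ∀ P, Dw ω P = L.foldr (fun i Q => D i Q) P) :
    LinearIndependent (↥(symmetricSubalgebra (Fin n) K))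
        (fun ω : Equiv.Perm (Fin n) => Dw ω (∏ i : Fin n, X i ^ i.val)) ∧
    Submodule.span (↥(symmetricSubalgebra (Fin n) K))
        (Set.range (fun ω : Equiv.Perm (Fin n) => Dw ω (∏ i : Fin n, X i ^ i.val))) = ⊤ :=
  demazure_staircase_basis_general n D hD Dw hDw
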